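/- Let f be a homogeneous polynomial of degree n in X_1,…,X_d over ℂ and let f̄ denote the polynomial obtained from f by complex-conjugating every coefficient. Then for every natural number k, T_{f̄} maps the space H_k of homogeneous degree-k polynomials into itself and the characteristic polynomial of the restriction of T_{f̄} to H_k equals the characteristic polynomial of the restriction of T_f to H_k; moreover ‖(f̄)^k‖² = ‖f^k‖² for all k. (Neither the block spectra nor the moments can distinguish a multiphoton state from its complex conjugate.) -/

import Mathlib

open MvPolynomial

/-- The differential operator `∂^α = ∏ i, (∂/∂Xᵢ)^(α i)` acting on polynomials. -/
noncomputable def partialPow {d : ℕ} (α : Fin d →₀ ℕ) :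
    Module.End ℂ (MvPolynomial (Fin d) ℂ) :=
  (List.ofFn fun i : Fin d =>
    ((pderiv i).toLinearMap ^ (α i) : Module.End ℂ (MvPolynomial (Fin d) ℂ))).prod

/-- The annihilation operator `f̄(∂) : g ↦ Σ_α conj(c_α) ∂^α g`. -/
noncomputable def annOp {d : ℕ} (f : MvPolynomial (Fin d) ℂ) :
    Module.End ℂ (MvPolynomial (Fin d) ℂ) :=
  ∑ α ∈ f.support, (starRingEnd ℂ) (coeff α f) • partialPow α

/-- `T_f : g ↦ f̄(∂)(f·g)`, the Bargmann representation of `f(a) f(a)†`. -/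
noncomputable def Tf {d : ℕ} (f : MvPolynomial (Fin d) ℂ) :
    Module.End ℂ (MvPolynomial (Fin d) ℂ) :=
  annOp f ∘ₗ LinearMap.mulLeft ℂ f

/-- The Fischer squared norm `‖f‖² = Σ_α |c_α(f)|² · α!` (a real number). -/
noncomputable def fischerNormSq {d : ℕ} (f : MvPolynomial (Fin d) ℂ) : ℝ :=
  ∑ α ∈ f.support, Complex.normSq (coeff α f) * (α.prod fun _ m => (m.factorial : ℝ))

/-- The polynomial `f̄` obtained from `f` by conjugating all coefficients. -/
noncomputable def conjPoly {d : ℕ} (f : MvPolynomial (Fin d) ℂ) : MvPolynomial (Fin d) ℂ :=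
  map (starRingEnd ℂ) f

/-- The space of homogeneous polynomials of a fixed degree is finite dimensional. -/
instance (d k : ℕ) : Module.Finite ℂ ↥(homogeneousSubmodule (Fin d) ℂ k) := by
  classical
  have hfin : {m : Fin d →₀ ℕ | m.degree = k}.Finite :=
    (Finsupp.finite_of_degree_le k).subset fun m hm => le_of_eq hm
  haveI : Finite ({m : Fin d →₀ ℕ | m.degree = k} : Set _) := hfin
  exact Module.Finite.equiv
    (((AddMonoidAlgebra.supportedEquivFinsupp _).symm).trans
      (LinearEquiv.ofEq _ _ (homogeneousSubmodule_eq_finsupp_supported (Fin d) ℂ k).symm))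

/-! In the normalized coefficients `γ! · c_γ(p)` the operator `∂^α` acts as the shift
`γ ↦ γ + α`. Hence `∂^α` lowers degrees by `|α|`, so `T_f` preserves `H_k`; and in the monomial
basis of `H_k` the matrices `A` of `T_{f̄}` and `M` of `T_f` satisfy `γ! · A_{γβ} = M_{βγ} · β!`,
both sides being `∑ c_{α'} · conj (c_α) · (α + β)!` over `α, α' ∈ supp f` with
`α + β = γ + α'`. This is the self-adjointness of `T_f` for the Fischer product (Gram matrix
`D = diag (γ!)`) combined with `A = conj M`. So `A = D⁻¹ Mᵀ D` has the characteristic polynomial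
of `M`. The moments agree because `(f̄)^k` is the conjugate of `f^k`, whose coefficients have the
same moduli. -/

theorem Matrix.charpoly_eq_of_semiconjBy {n R : Type*} [Fintype n] [DecidableEq n] [CommRing R]
    {W A B : Matrix n n R} (hW : IsUnit W) (h : SemiconjBy W A B) :
    A.charpoly = B.charpoly := by
  obtain ⟨u, rfl⟩ := hW
  have hA : A = u⁻¹.val * B * u.val := by
    rw [mul_assoc, ← h.eq, ← mul_assoc, Units.inv_mul, one_mul]
  rw [hA, Matrix.charpoly_mul_comm, ← mul_assoc, Units.mul_inv, one_mul]

namespace Finsupp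

variable {σ : Type*} [Fintype σ]

def factorial (α : σ →₀ ℕ) : ℕ := ∏ i, (α i).factorial

theorem factorial_pos (α : σ →₀ ℕ) : 0 < α.factorial :=
  Finset.prod_pos fun i _ => Nat.factorial_pos (α i)

theorem factorial_add_single_one [DecidableEq σ] (γ : σ →₀ ℕ) (i : σ) :
    (γ + single i 1).factorial = γ.factorial * (γ i + 1) := by
  have hrest : ∀ j ∈ Finset.univ.erase i,
      ((γ + single i 1 : σ →₀ ℕ) j).factorial = (γ j).factorial := fun j hj => by
    rw [add_apply, single_eq_of_ne (Finset.ne_of_mem_erase hj), add_zero]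
  rw [factorial, factorial, ← Finset.mul_prod_erase _ _ (Finset.mem_univ i),
    ← Finset.mul_prod_erase _ _ (Finset.mem_univ i), Finset.prod_congr rfl hrest, add_apply,
    single_eq_same, Nat.factorial_succ]
  ring

end Finsupp

namespace MvPolynomial

section Factorial

variable {σ R : Type*} [DecidableEq σ] [CommSemiring R]

theorem coeff_mul_monomial_one (f : MvPolynomial σ R) (β m : σ →₀ ℕ) :
    coeff m (f * monomial β 1) = ∑ α ∈ f.support, if α + β = m then coeff α f else 0 := by
  conv_lhs => rw [f.as_sum, Finset.sum_mul, coeff_sum]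
  refine Finset.sum_congr rfl fun α _ => ?_
  rw [monomial_mul, mul_one, coeff_monomial]

variable [Fintype σ]

theorem factorial_mul_coeff_pderiv (i : σ) (γ : σ →₀ ℕ) (p : MvPolynomial σ R) :
    (γ.factorial : R) * coeff γ (pderiv i p)
      = (γ + Finsupp.single i 1).factorial * coeff (γ + Finsupp.single i 1) p := by
  rw [coeff_pderiv, Finsupp.factorial_add_single_one]
  push_cast
  ring

theorem factorial_mul_coeff_pderiv_pow (i : σ) (k : ℕ) (γ : σ →₀ ℕ) (p : MvPolynomial σ R) :
    (γ.factorial : R) * coeff γ (((pderiv i).toLinearMap ^ k : Module.End R _) p)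
      = (γ + Finsupp.single i k).factorial * coeff (γ + Finsupp.single i k) p := by
  induction k generalizing γ with
  | zero => simp
  | succ k ih =>
    rw [pow_succ', Module.End.mul_apply, Derivation.coeFn_coe, factorial_mul_coeff_pderiv, ih,
      add_assoc, ← Finsupp.single_add, add_comm 1 k]

theorem factorial_mul_coeff_list_prod_pderiv_pow (l : List σ) (α γ : σ →₀ ℕ)
    (p : MvPolynomial σ R) :
    (γ.factorial : R) *
        coeff γ ((l.map fun i => ((pderiv i).toLinearMap ^ α i : Module.End R _)).prod p)
      = (γ + (l.map fun i => Finsupp.single i (α i)).sum).factorial *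
          coeff (γ + (l.map fun i => Finsupp.single i (α i)).sum) p := by
  induction l generalizing γ with
  | nil => simp
  | cons i l ih =>
    rw [List.map_cons, List.prod_cons, Module.End.mul_apply, factorial_mul_coeff_pderiv_pow, ih,
      List.map_cons, List.sum_cons, add_assoc]

end Factorial

section HomogeneousBasis

variable (σ R : Type*) [CommSemiring R]

noncomputable def homogeneousBasis (k : ℕ) :
    Module.Basis {m : σ →₀ ℕ | m.degree = k} R (homogeneousSubmodule σ R k) :=
  (basisRestrictSupport R _).map
    (LinearEquiv.ofEq _ _ (homogeneousSubmodule_eq_finsupp_supported σ R k).symm)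

variable {σ R}

theorem homogeneousBasis_repr_apply {k : ℕ} (g : homogeneousSubmodule σ R k)
    (m : {m : σ →₀ ℕ | m.degree = k}) :
    (homogeneousBasis σ R k).repr g m = coeff m (g : MvPolynomial σ R) := rfl

theorem coe_homogeneousBasis {k : ℕ} (m : {m : σ →₀ ℕ | m.degree = k}) :
    (homogeneousBasis σ R k m : MvPolynomial σ R) = monomial m 1 := by
  classical
  have hmem : monomial (m : σ →₀ ℕ) (1 : R) ∈ homogeneousSubmodule σ R k :=
    isHomogeneous_monomial 1 m.2
  suffices homogeneousBasis σ R k m = ⟨monomial m 1, hmem⟩ from congrArg Subtype.val this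
  refine (homogeneousBasis σ R k).repr.injective (Finsupp.ext fun m' => ?_)
  simp [homogeneousBasis_repr_apply, coeff_monomial, Finsupp.single_apply, Subtype.ext_iff]

theorem toMatrix_homogeneousBasis_restrict {k : ℕ} [Fintype {m : σ →₀ ℕ | m.degree = k}]
    [DecidableEq {m : σ →₀ ℕ | m.degree = k}] (T : Module.End R (MvPolynomial σ R))
    (hT : ∀ g ∈ homogeneousSubmodule σ R k, T g ∈ homogeneousSubmodule σ R k)
    (γ β : {m : σ →₀ ℕ | m.degree = k}) :
    LinearMap.toMatrix (homogeneousBasis σ R k) (homogeneousBasis σ R k) (T.restrict hT) γ β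
      = coeff γ (T (monomial β 1)) := by
  rw [LinearMap.toMatrix_apply, homogeneousBasis_repr_apply, LinearMap.coe_restrict_apply,
    coe_homogeneousBasis]

end HomogeneousBasis

end MvPolynomial

section

variable {d : ℕ}

theorem factorial_mul_coeff_partialPow (α γ : Fin d →₀ ℕ) (p : MvPolynomial (Fin d) ℂ) :
    (γ.factorial : ℂ) * coeff γ (partialPow α p) = (γ + α).factorial * coeff (γ + α) p := by
  rw [partialPow, List.ofFn_eq_map, factorial_mul_coeff_list_prod_pderiv_pow, ← Fin.sum_univ_def,
    Finsupp.univ_sum_single]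

theorem MvPolynomial.IsHomogeneous.partialPow {n k : ℕ} {p : MvPolynomial (Fin d) ℂ}
    (hp : p.IsHomogeneous (n + k)) {α : Fin d →₀ ℕ} (hα : α.degree = n) :
    (partialPow α p).IsHomogeneous k := by
  intro γ hγ
  have hcoeff : coeff (γ + α) p ≠ 0 := by
    intro h0
    have := factorial_mul_coeff_partialPow α γ p
    rw [h0, mul_zero, mul_eq_zero, Nat.cast_eq_zero] at this
    exact this.elim (Finsupp.factorial_pos γ).ne' hγ
  have := hp hcoeff
  rw [map_add, ← hα, Finsupp.degree_eq_weight_one] at this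
  exact Nat.add_right_cancel (this.trans (add_comm _ _))

theorem Tf_mem_homogeneousSubmodule {n k : ℕ} {f : MvPolynomial (Fin d) ℂ}
    (hf : f.IsHomogeneous n) {g : MvPolynomial (Fin d) ℂ}
    (hg : g ∈ homogeneousSubmodule (Fin d) ℂ k) :
    Tf f g ∈ homogeneousSubmodule (Fin d) ℂ k := by
  rw [Tf, LinearMap.comp_apply, LinearMap.mulLeft_apply, annOp, LinearMap.sum_apply]
  refine Submodule.sum_mem _ fun α hα => Submodule.smul_mem _ _ ?_
  have hα : α.degree = n := by
    rw [Finsupp.degree_eq_weight_one]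
    exact hf (mem_support_iff.mp hα)
  exact (hf.mul hg).partialPow hα

theorem factorial_mul_coeff_Tf_monomial (f : MvPolynomial (Fin d) ℂ) (β γ : Fin d →₀ ℕ) :
    (γ.factorial : ℂ) * coeff γ (Tf f (monomial β 1))
      = ∑ α' ∈ f.support, ∑ α ∈ f.support,
          if α + β = γ + α' then starRingEnd ℂ (coeff α' f) * coeff α f * (γ + α').factorial
          else 0 := by
  simp only [Tf, annOp, LinearMap.comp_apply, LinearMap.mulLeft_apply, LinearMap.sum_apply,
    LinearMap.smul_apply, coeff_sum, coeff_smul, smul_eq_mul, Finset.mul_sum]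
  refine Finset.sum_congr rfl fun α' _ => ?_
  rw [mul_left_comm, factorial_mul_coeff_partialPow, coeff_mul_monomial_one, Finset.mul_sum,
    Finset.mul_sum]
  refine Finset.sum_congr rfl fun α _ => ?_
  split_ifs <;> ring

theorem factorial_mul_coeff_Tf_conjPoly (f : MvPolynomial (Fin d) ℂ) (β γ : Fin d →₀ ℕ) :
    (γ.factorial : ℂ) * coeff γ (Tf (conjPoly f) (monomial β 1))
      = coeff β (Tf f (monomial γ 1)) * β.factorial := by
  rw [factorial_mul_coeff_Tf_monomial, mul_comm, factorial_mul_coeff_Tf_monomial, Finset.sum_comm]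
  simp only [conjPoly, support_map_of_injective f (starRingEnd ℂ).injective, coeff_map,
    Complex.conj_conj]
  refine Finset.sum_congr rfl fun α _ => Finset.sum_congr rfl fun α' _ => ?_
  by_cases h : α + β = γ + α'
  · rw [if_pos h, if_pos (by rw [add_comm α', h.symm, add_comm]), ← h, add_comm β]
    ring
  · rw [if_neg h, if_neg fun h' => h (by rw [add_comm α, ← h', add_comm])]

theorem fischerNormSq_conjPoly (g : MvPolynomial (Fin d) ℂ) :
    fischerNormSq (conjPoly g) = fischerNormSq g := by
  simp only [fischerNormSq, conjPoly, support_map_of_injective g (starRingEnd ℂ).injective,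
    coeff_map, Complex.normSq_conj]

end

/-- Neither the block spectra nor the moments distinguish a state from its
complex conjugate: for every `k`, `T_{f̄}` preserves `H_k` and the characteristic polynomial
of its restriction to `H_k` equals that of `T_f`; moreover `‖(f̄)^k‖² = ‖f^k‖²` for all `k`. -/
theorem conjPoly_invariants (d n : ℕ) (f : MvPolynomial (Fin d) ℂ) (hf : f.IsHomogeneous n) :
    (∀ k : ℕ, ∃ (h₁ : ∀ g ∈ homogeneousSubmodule (Fin d) ℂ k,
          Tf (conjPoly f) g ∈ homogeneousSubmodule (Fin d) ℂ k)
        (h₂ : ∀ g ∈ homogeneousSubmodule (Fin d) ℂ k,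
          Tf f g ∈ homogeneousSubmodule (Fin d) ℂ k),
        ((Tf (conjPoly f)).restrict h₁).charpoly = ((Tf f).restrict h₂).charpoly) ∧
    (∀ k : ℕ, fischerNormSq ((conjPoly f) ^ k) = fischerNormSq (f ^ k)) := by
  refine ⟨fun k => ?_, fun k => ?_⟩
  · have h₁ : ∀ g ∈ homogeneousSubmodule (Fin d) ℂ k,
        Tf (conjPoly f) g ∈ homogeneousSubmodule (Fin d) ℂ k :=
      fun g => Tf_mem_homogeneousSubmodule (hf.map (starRingEnd ℂ))
    have h₂ : ∀ g ∈ homogeneousSubmodule (Fin d) ℂ k, Tf f g ∈ homogeneousSubmodule (Fin d) ℂ k :=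
      fun g => Tf_mem_homogeneousSubmodule hf
    refine ⟨h₁, h₂, ?_⟩
    let b := homogeneousBasis (Fin d) ℂ k
    have : Fintype {m : Fin d →₀ ℕ | m.degree = k} :=
      @Fintype.ofFinite _ (Module.Finite.finite_basis b)
    rw [← LinearMap.charpoly_toMatrix _ b, ← LinearMap.charpoly_toMatrix _ b,
      ← Matrix.charpoly_transpose (LinearMap.toMatrix b b ((Tf f).restrict h₂))]
    refine Matrix.charpoly_eq_of_semiconjBy (W := Matrix.diagonal fun γ => (γ.1.factorial : ℂ))
      (Matrix.isUnit_diagonal.mpr (Pi.isUnit_iff.mpr fun γ =>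
        (Nat.cast_ne_zero.mpr (Finsupp.factorial_pos γ.1).ne').isUnit)) ?_
    ext γ β
    rw [Matrix.diagonal_mul, Matrix.mul_diagonal, Matrix.transpose_apply,
      toMatrix_homogeneousBasis_restrict, toMatrix_homogeneousBasis_restrict]
    exact factorial_mul_coeff_Tf_conjPoly f β γ
  · rw [conjPoly, ← map_pow, ← conjPoly, fischerNormSq_conjPoly]
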